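/- arXiv:1905.09384 — 4 statements merged into one kernel-verified Lean document; each statement's English description precedes it below -/
import Mathlib

section
/- If X and Y are independent exponential random variables with means m_x and m_y respectively, then the harmonic-mean-type random variable W = XY/(X+Y) has cumulative distribution function F_W(w) = 1 - (2w/√(m_x m_y)) · exp(-w/m_x - w/m_y) · K_1(2w/√(m_x m_y)) for w > 0, where K_1 is the modified Bessel function of the second kind of order 1. -/
/-!
For `x, y > 0` one has `w < xy/(x+y)` iff `x > w` and `y > wx/(x-w)`. Conditioning on `X` and
writing `a = 1/m_x`, `b = 1/m_y` for the rates gives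
`P(W > w) = ∫_{x>w} a e^{-ax} e^{-b wx/(x-w)} dx`. The shift `x = w + t` turns this into
`a e^{-(a+b)w} ∫_0^∞ e^{-at - bw²/t} dt`, and the substitution `t = √(b/a) e^u` turns the last
integral into `√(b/a) ∫_ℝ e^{-2√(ab) cosh u} e^u du = 2 √(b/a) K₁(2√(ab))`.
-/

open MeasureTheory ProbabilityTheory Real

/-- Modified Bessel function of the second kind of order 1, via the standard
integral representation `K₁(x) = ∫_0^∞ exp (-x cosh t) * cosh t dt`. -/
noncomputable def besselK1 (x : ℝ) : ℝ :=
  ∫ t in Set.Ioi (0 : ℝ), Real.exp (-x * Real.cosh t) * Real.cosh t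

open Set

section ExpSubstitution

variable {E : Type*} [NormedAddCommGroup E] [NormedSpace ℝ E] {c : ℝ}

lemma image_univ_const_mul_exp (hc : 0 < c) : (fun u => c * exp u) '' univ = Ioi 0 := by
  rw [image_univ, show (fun u => c * exp u) = (c * ·) ∘ exp from rfl, range_comp, range_exp,
    image_mul_left_Ioi hc, mul_zero]

lemma injective_const_mul_exp (hc : 0 < c) : Function.Injective fun u => c * exp u :=
  fun _ _ h => exp_injective (mul_left_cancel₀ hc.ne' h)

lemma integral_Ioi_zero_eq_integral_const_mul_exp (hc : 0 < c) (g : ℝ → E) :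
    ∫ t in Ioi 0, g t = c • ∫ u, exp u • g (c * exp u) := by
  rw [← image_univ_const_mul_exp hc, integral_image_eq_integral_abs_deriv_smul MeasurableSet.univ
    (fun u _ => ((hasDerivAt_exp u).const_mul c).hasDerivWithinAt)
    (injective_const_mul_exp hc).injOn, Measure.restrict_univ, ← integral_smul]
  congr 1 with u
  rw [abs_of_pos (by positivity), mul_smul]

lemma integrableOn_Ioi_zero_iff_integrable_const_mul_exp (hc : 0 < c) (g : ℝ → E) :
    IntegrableOn g (Ioi 0) ↔ Integrable fun u => exp u • g (c * exp u) := by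
  rw [← image_univ_const_mul_exp hc, integrableOn_image_iff_integrableOn_abs_deriv_smul
    MeasurableSet.univ (fun u _ => ((hasDerivAt_exp u).const_mul c).hasDerivWithinAt)
    (injective_const_mul_exp hc).injOn, integrableOn_univ]
  have : (fun u => |c * exp u| • g (c * exp u)) = c • fun u => exp u • g (c * exp u) := by
    ext u
    rw [abs_of_pos (by positivity), mul_smul, Pi.smul_apply]
  rw [this, integrable_smul_iff hc.ne']

end ExpSubstitution

lemma exp_neg_mul_cosh_mul_exp_eq (s u : ℝ) :
    exp (-s * cosh u) * exp u = exp u * exp (-(s / 2 * exp u) - s / 2 / exp u) := by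
  rw [cosh_eq, exp_neg, mul_comm]
  ring_nf

lemma integrable_exp_neg_mul_cosh_mul_exp {s : ℝ} (hs : 0 < s) :
    Integrable fun u => exp (-s * cosh u) * exp u := by
  have hg : IntegrableOn (fun t => exp (-(s / 2 * t) - s / 2 / t)) (Ioi 0) := by
    refine (exp_neg_integrableOn_Ioi 0 (half_pos hs)).mono' (by fun_prop) ?_
    filter_upwards [ae_restrict_mem measurableSet_Ioi] with t ht
    rw [norm_of_nonneg (exp_nonneg _), ← neg_mul]
    have : 0 ≤ s / 2 / t := div_nonneg (half_pos hs).le (le_of_lt ht)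
    gcongr
    linarith
  refine ((integrableOn_Ioi_zero_iff_integrable_const_mul_exp one_pos _).1 hg).congr
    (ae_of_all _ fun u => ?_)
  simp only [smul_eq_mul, one_mul, exp_neg_mul_cosh_mul_exp_eq]

lemma integral_exp_neg_mul_cosh_mul_exp {s : ℝ} (hs : 0 < s) :
    ∫ u, exp (-s * cosh u) * exp u = 2 * besselK1 s := by
  have hint := integrable_exp_neg_mul_cosh_mul_exp hs
  have hint' : Integrable fun u => exp (-s * cosh u) * exp (-u) := by
    simpa using hint.comp_neg
  have hflip : ∫ u, exp (-s * cosh u) * exp (-u) = ∫ u, exp (-s * cosh u) * exp u := by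
    simpa using integral_neg_eq_self (fun u => exp (-s * cosh u) * exp u) volume
  have heven : ∫ u, exp (-s * cosh u) * cosh u = 2 * besselK1 s := by
    simpa [besselK1, cosh_abs] using integral_comp_abs (f := fun u => exp (-s * cosh u) * cosh u)
  calc ∫ u, exp (-s * cosh u) * exp u
      = ((∫ u, exp (-s * cosh u) * exp u) + ∫ u, exp (-s * cosh u) * exp (-u)) / 2 := by
        rw [hflip]; ring
    _ = ∫ u, exp (-s * cosh u) * cosh u := by
        rw [← integral_add hint hint', ← integral_div]
        congr 1 with u
        rw [cosh_eq]; ring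
    _ = 2 * besselK1 s := heven

lemma mul_sqrt_div_self {a B : ℝ} (ha : 0 < a) (hB : 0 ≤ B) : a * √(B / a) = √(a * B) := by
  rw [sqrt_div hB, mul_div_left_comm, div_sqrt, sqrt_mul ha.le, mul_comm]

theorem integral_exp_neg_mul_sub_div {a b : ℝ} (ha : 0 < a) (hb : 0 < b) :
    ∫ t in Ioi 0, exp (-(a * t) - b / t) = 2 * √(b / a) * besselK1 (2 * √(a * b)) := by
  set c := √(b / a)
  have hc : 0 < c := sqrt_pos.2 (div_pos hb ha)
  have hc_sq : c ^ 2 = b / a := sq_sqrt (div_pos hb ha).le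
  have hac : a * c = √(a * b) := mul_sqrt_div_self ha hb.le
  have hbc : b / c = √(a * b) := by
    rw [← hac, div_eq_iff hc.ne', mul_assoc, ← sq, hc_sq]
    field_simp
  have hs : 0 < 2 * √(a * b) := by positivity
  rw [integral_Ioi_zero_eq_integral_const_mul_exp hc, mul_comm 2 c, mul_assoc,
    ← integral_exp_neg_mul_cosh_mul_exp hs, smul_eq_mul]
  congr 2 with u
  rw [exp_neg_mul_cosh_mul_exp_eq, smul_eq_mul, ← mul_assoc, hac, ← div_div, hbc]
  ring_nf

lemma lt_mul_div_add_iff {w x y : ℝ} (hw : 0 < w) (hx : 0 < x) (hy : 0 < y) :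
    w < x * y / (x + y) ↔ w < x ∧ w * x / (x - w) < y := by
  rw [lt_div_iff₀ (by positivity)]
  constructor
  · intro h
    have hwx : w < x := by nlinarith
    refine ⟨hwx, ?_⟩
    rw [div_lt_iff₀ (sub_pos.2 hwx)]
    linarith
  · rintro ⟨hwx, h⟩
    rw [div_lt_iff₀ (sub_pos.2 hwx)] at h
    linarith

section ExpMeasure

variable {r : ℝ}

lemma expMeasure_Ioi (hr : 0 < r) {x : ℝ} (hx : 0 ≤ x) :
    expMeasure r (Ioi x) = ENNReal.ofReal (exp (-(r * x))) := by
  have := isProbabilityMeasure_expMeasure hr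
  have hexp : exp (-(r * x)) ≤ 1 := exp_le_one_iff.2 (by nlinarith)
  rw [← compl_Iic, prob_compl_eq_one_sub measurableSet_Iic, ← ofReal_cdf, cdf_expMeasure_eq hr,
    if_pos hx, ← ENNReal.ofReal_one, ← ENNReal.ofReal_sub _ (by linarith), sub_sub_cancel]

lemma expMeasure_compl_Ioi_zero (hr : 0 < r) : expMeasure r (Ioi 0)ᶜ = 0 := by
  have := isProbabilityMeasure_expMeasure hr
  rw [prob_compl_eq_zero_iff measurableSet_Ioi, expMeasure_Ioi hr le_rfl]
  simp

end ExpMeasure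

section Harmonic

variable {a b w : ℝ}

lemma expMeasure_setOf_lt_mul_div_add (hb : 0 < b) (hw : 0 < w) {x : ℝ} (hx : 0 < x) :
    expMeasure b {y | w < x * y / (x + y)} =
      (Ioi w).indicator (fun x => ENNReal.ofReal (exp (-(b * (w * x / (x - w)))))) x := by
  rw [← measure_inter_conull (expMeasure_compl_Ioi_zero hb)]
  by_cases hwx : x ∈ Ioi w
  · have hc : 0 < w * x / (x - w) := div_pos (mul_pos hw hx) (sub_pos.2 hwx)
    have hslice : {y | w < x * y / (x + y)} ∩ Ioi 0 = Ioi (w * x / (x - w)) := by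
      ext y
      refine ⟨fun ⟨h, hy⟩ => ((lt_mul_div_add_iff hw hx hy).1 h).2, fun h => ?_⟩
      have hy : 0 < y := hc.trans h
      exact ⟨(lt_mul_div_add_iff hw hx hy).2 ⟨hwx, h⟩, hy⟩
    rw [hslice, expMeasure_Ioi hb hc.le, indicator_of_mem hwx]
  · have hslice : {y | w < x * y / (x + y)} ∩ Ioi 0 = ∅ :=
      eq_empty_of_forall_notMem fun y ⟨h, hy⟩ => hwx ((lt_mul_div_add_iff hw hx hy).1 h).1
    rw [hslice, measure_empty, indicator_of_notMem hwx]

lemma expMeasure_prod_real_setOf_lt_mul_div_add (ha : 0 < a) (hb : 0 < b) (hw : 0 < w) :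
    ((expMeasure a).prod (expMeasure b)).real {p | w < p.1 * p.2 / (p.1 + p.2)} =
      ∫ x in Ioi w, a * exp (-(a * x) - b * (w * x / (x - w))) := by
  have hpos : ∀ᵐ x ∂expMeasure a, x ∈ Ioi 0 := mem_ae_iff.2 (expMeasure_compl_Ioi_zero ha)
  have hdensity : ∀ x, exponentialPDF a x *
      (Ioi w).indicator (fun x => ENNReal.ofReal (exp (-(b * (w * x / (x - w)))))) x =
      (Ioi w).indicator
        (fun x => ENNReal.ofReal (a * exp (-(a * x) - b * (w * x / (x - w))))) x := by
    intro x
    by_cases hwx : x ∈ Ioi w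
    · rw [indicator_of_mem hwx, indicator_of_mem hwx,
        exponentialPDF_of_nonneg (hw.trans hwx).le, ← ENNReal.ofReal_mul (by positivity),
        mul_assoc, ← exp_add, ← sub_eq_add_neg]
    · rw [indicator_of_notMem hwx, indicator_of_notMem hwx, mul_zero]
  have := isProbabilityMeasure_expMeasure hb
  rw [measureReal_def, Measure.prod_apply (measurableSet_lt measurable_const (by fun_prop))]
  simp only [preimage_ofPred_eq]
  rw [lintegral_congr_ae (hpos.mono fun x hx => expMeasure_setOf_lt_mul_div_add hb hw hx),
    show expMeasure a = volume.withDensity (exponentialPDF a) from rfl,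
    lintegral_withDensity_eq_lintegral_mul _
      (show Measurable (exponentialPDF a) from (measurable_exponentialPDFReal a).ennreal_ofReal)
      ((by fun_prop : Measurable _).indicator measurableSet_Ioi)]
  simp only [Pi.mul_apply, hdensity]
  rw [lintegral_indicator measurableSet_Ioi, ← integral_eq_lintegral_of_nonneg_ae
    (ae_of_all _ fun x => by positivity) (by fun_prop : Measurable _).aestronglyMeasurable]

lemma integral_Ioi_exp_neg_mul_sub_mul_div_sub (ha : 0 < a) (hb : 0 < b) (hw : 0 < w) :
    ∫ x in Ioi w, a * exp (-(a * x) - b * (w * x / (x - w))) =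
      2 * (w * √(a * b)) * exp (-((a + b) * w)) * besselK1 (2 * (w * √(a * b))) := by
  rw [← (measurePreserving_add_right volume w).setIntegral_preimage_emb
    (measurableEmbedding_addRight w), preimage_add_const_Ioi, sub_self,
    setIntegral_congr_fun measurableSet_Ioi
      (g := fun t => a * exp (-((a + b) * w)) * exp (-(a * t) - b * w ^ 2 / t)) ?shift,
    integral_const_mul, integral_exp_neg_mul_sub_div ha (by positivity)]
  case shift =>
    intro t ht
    dsimp only
    rw [add_sub_cancel_right, mul_assoc, ← exp_add]
    have ht : t ≠ 0 := (mem_Ioi.1 ht).ne'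
    congr 2
    field_simp
    ring
  have hsqrt : √(a * (b * w ^ 2)) = w * √(a * b) := by
    rw [← mul_assoc, sqrt_mul' _ (sq_nonneg w), sqrt_sq hw.le, mul_comm]
  have hcoef : a * √(b * w ^ 2 / a) = w * √(a * b) := by
    rw [mul_sqrt_div_self ha (by positivity), hsqrt]
  calc a * exp (-((a + b) * w)) * (2 * √(b * w ^ 2 / a) * besselK1 (2 * √(a * (b * w ^ 2))))
      = 2 * (a * √(b * w ^ 2 / a)) * exp (-((a + b) * w)) *
          besselK1 (2 * √(a * (b * w ^ 2))) := by ring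
    _ = _ := by rw [hcoef, hsqrt]

end Harmonic

theorem exp_harmonic_cdf {Ω : Type*} [MeasureSpace Ω] [IsProbabilityMeasure (ℙ : Measure Ω)]
    (X Y : Ω → ℝ) (mx my : ℝ) (hmx : 0 < mx) (hmy : 0 < my)
    (hX : Measurable X) (hY : Measurable Y)
    (hXd : Measure.map X ℙ = expMeasure (1 / mx))
    (hYd : Measure.map Y ℙ = expMeasure (1 / my))
    (hind : IndepFun X Y ℙ) :
    ∀ w : ℝ, 0 < w →
      (ℙ {ω | X ω * Y ω / (X ω + Y ω) ≤ w}).toReal =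
        1 - (2 * w / Real.sqrt (mx * my)) * Real.exp (-(w / mx) - w / my) *
          besselK1 (2 * w / Real.sqrt (mx * my)) := by
  intro w hw
  have hpair : Measure.map (fun ω => (X ω, Y ω)) ℙ =
      (expMeasure (1 / mx)).prod (expMeasure (1 / my)) := by
    rw [← hXd, ← hYd]
    exact (indepFun_iff_map_prod_eq_prod_map_map hX.aemeasurable hY.aemeasurable).1 hind
  have hS : MeasurableSet {p : ℝ × ℝ | w < p.1 * p.2 / (p.1 + p.2)} :=
    measurableSet_lt measurable_const (by fun_prop)
  have hsqrt : w * √(1 / mx * (1 / my)) = w / √(mx * my) := by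
    rw [one_div_mul_one_div, one_div, sqrt_inv, div_eq_mul_inv]
  have hle : {ω | X ω * Y ω / (X ω + Y ω) ≤ w} =
      ((fun ω => (X ω, Y ω)) ⁻¹' {p | w < p.1 * p.2 / (p.1 + p.2)})ᶜ := by
    ext; simp
  rw [hle, ← measureReal_def, probReal_compl_eq_one_sub (hS.preimage (hX.prodMk hY)),
    ← map_measureReal_apply (hX.prodMk hY) hS, hpair,
    expMeasure_prod_real_setOf_lt_mul_div_add (by positivity) (by positivity) hw,
    integral_Ioi_exp_neg_mul_sub_mul_div_sub (by positivity) (by positivity) hw, hsqrt,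
    show -((1 / mx + 1 / my) * w) = -(w / mx) - w / my by ring, mul_div_assoc]
end

section
/- For independent exponential random variables γ_g, γ_h with means m_g ≠ m_h, E[ln(1 + γ_g/γ_h)] = m_g ln(m_g/m_h)/(m_g - m_h). -/
/-!
By the layer-cake formula, `E[log (1 + Z)] = ∫₀^∞ P(Z > t) / (1 + t) dt` for `Z = γ_g / γ_h ≥ 0`.
Conditioning on `γ_h`, `P(γ_g > t γ_h) = E[exp (-t γ_h / m_g)]` is the Laplace transform of
`γ_h` at `t / m_g`, namely `m_g / (m_g + m_h t)`. What remains is the elementary integral of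
`m_g / ((m_g + m_h t)(1 + t))`, which partial fractions turn into a difference of logarithms.
-/

open MeasureTheory ProbabilityTheory Real Set Filter Topology

namespace ProbabilityTheory

variable {r : ℝ}

lemma expMeasure_Iic_eq (hr : 0 < r) {c : ℝ} (hc : 0 ≤ c) :
    expMeasure r (Iic c) = ENNReal.ofReal (1 - exp (-(r * c))) := by
  have := isProbabilityMeasure_expMeasure hr
  rw [← ofReal_cdf, cdf_expMeasure_eq hr, if_pos hc]

lemma expMeasure_Iic_zero (hr : 0 < r) : expMeasure r (Iic 0) = 0 := by
  simp [expMeasure_Iic_eq hr le_rfl]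

lemma expMeasure_Ioi_eq (hr : 0 < r) {c : ℝ} (hc : 0 ≤ c) :
    expMeasure r (Ioi c) = ENNReal.ofReal (exp (-(r * c))) := by
  have := isProbabilityMeasure_expMeasure hr
  have hexp : exp (-(r * c)) ≤ 1 := exp_le_one_iff.2 (by nlinarith)
  rw [← compl_Iic, prob_compl_eq_one_sub measurableSet_Iic, expMeasure_Iic_eq hr hc,
    ← ENNReal.ofReal_one, ← ENNReal.ofReal_sub _ (by linarith), sub_sub_cancel]

lemma ae_pos_of_map_eq_expMeasure {Ω : Type*} [MeasurableSpace Ω] {μ : Measure Ω} {X : Ω → ℝ}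
    (hX : AEMeasurable X μ) (hr : 0 < r) (hXd : μ.map X = expMeasure r) : ∀ᵐ ω ∂μ, 0 < X ω := by
  have h : μ (X ⁻¹' Iic 0) = 0 := by
    rw [← Measure.map_apply_of_aemeasurable hX measurableSet_Iic, hXd, expMeasure_Iic_zero hr]
  rw [ae_iff]
  simp only [not_lt]
  exact h

lemma lintegral_exp_neg_mul_expMeasure (hr : 0 < r) {s : ℝ} (hs : 0 < r + s) :
    ∫⁻ x, ENNReal.ofReal (exp (-(s * x))) ∂expMeasure r = ENNReal.ofReal (r / (r + s)) := by
  have hpdf : ∀ x, exponentialPDF r x * ENNReal.ofReal (exp (-(s * x)))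
      = (Ici 0).indicator (fun x ↦ ENNReal.ofReal (r * exp (-(r + s) * x))) x := by
    intro x
    rcases lt_or_ge x 0 with hx | hx
    · simp [exponentialPDF_of_neg hx, hx]
    · rw [exponentialPDF_of_nonneg hx, indicator_of_mem (mem_Ici.2 hx),
        ← ENNReal.ofReal_mul (by positivity), mul_assoc, ← exp_add]
      ring_nf
  have hint : IntegrableOn (fun x ↦ r * exp (-(r + s) * x)) (Ioi 0) :=
    (exp_neg_integrableOn_Ioi 0 hs).const_mul r
  have hexp : expMeasure r = volume.withDensity (exponentialPDF r) := rfl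
  rw [hexp, lintegral_withDensity_eq_lintegral_mul (f := exponentialPDF r) _
      (measurable_exponentialPDFReal r).ennreal_ofReal (by fun_prop)]
  simp only [Pi.mul_apply, hpdf]
  rw [lintegral_indicator measurableSet_Ici, ← Measure.restrict_congr_set Ioi_ae_eq_Ici,
    ← ofReal_integral_eq_lintegral_ofReal hint (ae_of_all _ fun x ↦ by positivity),
    integral_const_mul, integral_exp_mul_Ioi (by linarith)]
  congr 1
  field_simp
  simp

variable {Ω : Type*} [MeasurableSpace Ω] {μ : Measure Ω} {G H : Ω → ℝ} {a b t : ℝ}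

lemma measure_mul_lt_of_indepFun_expMeasure (hG : Measurable G) (hH : Measurable H)
    (ha : 0 < a) (hb : 0 < b) (hGd : μ.map G = expMeasure a) (hHd : μ.map H = expMeasure b)
    (hind : IndepFun G H μ) (ht : 0 ≤ t) :
    μ {ω | t * H ω < G ω} = ENNReal.ofReal (b / (b + a * t)) := by
  have := isProbabilityMeasure_expMeasure ha
  have := isProbabilityMeasure_expMeasure hb
  have hS : MeasurableSet {p : ℝ × ℝ | t * p.2 < p.1} :=
    measurableSet_lt (measurable_snd.const_mul t) measurable_fst
  calc μ {ω | t * H ω < G ω}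
      = (μ.map fun ω ↦ (G ω, H ω)) {p : ℝ × ℝ | t * p.2 < p.1} :=
        (Measure.map_apply (hG.prodMk hH) hS).symm
    _ = ∫⁻ h, expMeasure a (Ioi (t * h)) ∂expMeasure b := by
        rw [(indepFun_iff_map_prod_eq_prod_map_map' hG.aemeasurable hH.aemeasurable
          (by rw [hGd]; infer_instance) (by rw [hHd]; infer_instance)).1 hind, hGd, hHd,
          Measure.prod_apply_symm hS]
        rfl
    _ = ∫⁻ h, ENNReal.ofReal (exp (-((a * t) * h))) ∂expMeasure b := by
        refine lintegral_congr_ae ?_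
        filter_upwards [ae_pos_of_map_eq_expMeasure aemeasurable_id hb Measure.map_id]
          with h hh
        rw [expMeasure_Ioi_eq ha (by positivity), mul_assoc]
    _ = ENNReal.ofReal (b / (b + a * t)) :=
        lintegral_exp_neg_mul_expMeasure hb (by positivity)

lemma measure_lt_div_of_indepFun_expMeasure (hG : Measurable G) (hH : Measurable H)
    (ha : 0 < a) (hb : 0 < b) (hGd : μ.map G = expMeasure a) (hHd : μ.map H = expMeasure b)
    (hind : IndepFun G H μ) (ht : 0 ≤ t) :
    μ {ω | t < G ω / H ω} = ENNReal.ofReal (b / (b + a * t)) := by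
  rw [← measure_mul_lt_of_indepFun_expMeasure hG hH ha hb hGd hHd hind ht]
  refine measure_congr ?_
  filter_upwards [ae_pos_of_map_eq_expMeasure hH.aemeasurable hb hHd] with ω hω
  exact propext (lt_div_iff₀ hω)

end ProbabilityTheory

lemma integral_inv_one_add_of_nonneg {z : ℝ} (hz : 0 ≤ z) :
    ∫ s in (0 : ℝ)..z, (1 + s)⁻¹ = log (1 + z) := by
  rw [intervalIntegral.integral_comp_add_left (fun x ↦ x⁻¹), add_zero,
    integral_inv_of_pos one_pos (by linarith), div_one]

lemma lintegral_log_one_add_eq_lintegral_meas_lt {α : Type*} [MeasurableSpace α] (μ : Measure α)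
    {f : α → ℝ} (f_nn : 0 ≤ᵐ[μ] f) (f_mble : AEMeasurable f μ) :
    ∫⁻ ω, ENNReal.ofReal (log (1 + f ω)) ∂μ
      = ∫⁻ t in Ioi 0, μ {ω | t < f ω} * ENNReal.ofReal (1 + t)⁻¹ := by
  have hcont : ContinuousOn (fun s : ℝ ↦ (1 + s)⁻¹) (Ici 0) :=
    (continuous_const.add continuous_id).continuousOn.inv₀ fun s (hs : 0 ≤ s) ↦ by
      change 1 + s ≠ 0; positivity
  rw [← lintegral_comp_eq_lintegral_meas_lt_mul μ f_nn f_mble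
    (fun t ht ↦ ContinuousOn.intervalIntegrable
      (hcont.mono (by rw [uIcc_of_le ht.le]; exact Icc_subset_Ici_self)))
    ((ae_restrict_mem measurableSet_Ioi).mono fun t (ht : 0 < t) ↦ by positivity)]
  refine lintegral_congr_ae ?_
  filter_upwards [f_nn] with ω hω
  rw [integral_inv_one_add_of_nonneg hω]

lemma hasDerivAt_log_one_add_sub_log_div {a b t : ℝ} (hab : a ≠ b) (h1 : 0 < 1 + t)
    (h2 : 0 < a + b * t) :
    HasDerivAt (fun t ↦ (log (1 + t) - log (a + b * t)) / (a - b))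
      ((a + b * t) * (1 + t))⁻¹ t := by
  have hd := ((((hasDerivAt_id t).const_add 1).log h1.ne').sub
    ((((hasDerivAt_id t).const_mul b).const_add a).log h2.ne')).div_const (a - b)
  refine hd.congr_deriv ?_
  simp only [id]
  rw [div_sub_div _ _ h1.ne' h2.ne', div_div]
  field_simp [sub_ne_zero.2 hab]
  ring

lemma tendsto_log_one_add_sub_log {a b : ℝ} (hb : 0 < b) :
    Tendsto (fun t ↦ log (1 + t) - log (a + b * t)) atTop (𝓝 (-log b)) := by
  have hq : Tendsto (fun t : ℝ ↦ (t⁻¹ + 1) / (a * t⁻¹ + b)) atTop (𝓝 ((0 + 1) / (a * 0 + b))) :=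
    (tendsto_inv_atTop_zero.add_const 1).div
      ((tendsto_inv_atTop_zero.const_mul a).add_const b) (by simpa using hb.ne')
  rw [mul_zero, zero_add, zero_add] at hq
  rw [← log_inv, ← one_div]
  refine (hq.log (by simpa using hb.ne')).congr' ?_
  filter_upwards [eventually_gt_atTop 0, eventually_gt_atTop (-a / b)] with t ht hta
  have : 0 < a + b * t := by
    rw [div_lt_iff₀ hb] at hta; linarith
  rw [← log_div (by positivity) this.ne']
  congr 1
  field_simp

lemma integral_Ioi_inv_mul_one_add {a b : ℝ} (ha : 0 < a) (hb : 0 < b) (hab : a ≠ b) :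
    ∫ t in Ioi 0, ((a + b * t) * (1 + t))⁻¹ = log (a / b) / (a - b) := by
  rw [integral_Ioi_of_hasDerivAt_of_nonneg'
    (fun t (ht : 0 ≤ t) ↦ hasDerivAt_log_one_add_sub_log_div hab (by positivity) (by positivity))
    (fun t (ht : 0 < t) ↦ by positivity) ((tendsto_log_one_add_sub_log hb).div_const _),
    log_div ha.ne' hb.ne']
  simp only [add_zero, mul_zero, log_one]
  ring

theorem exp_log_one_add_ratio_mean_general {Ω : Type*} [MeasureSpace Ω]
    (G H : Ω → ℝ) (mg mh : ℝ) (hmg : 0 < mg) (hmh : 0 < mh) (hne : mg ≠ mh)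
    (hG : Measurable G) (hH : Measurable H)
    (hGd : Measure.map G ℙ = expMeasure (1 / mg))
    (hHd : Measure.map H ℙ = expMeasure (1 / mh))
    (hind : IndepFun G H ℙ) :
    ∫ ω, Real.log (1 + G ω / H ω) ∂ℙ = mg * Real.log (mg / mh) / (mg - mh) := by
  have ha : 0 < 1 / mg := by positivity
  have hb : 0 < 1 / mh := by positivity
  have hZ : 0 ≤ᵐ[ℙ] fun ω ↦ G ω / H ω := by
    filter_upwards [ae_pos_of_map_eq_expMeasure hG.aemeasurable ha hGd,
      ae_pos_of_map_eq_expMeasure hH.aemeasurable hb hHd] with ω hGω hHω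
    exact (div_pos hGω hHω).le
  have htail : ∀ t ∈ Ioi (0 : ℝ), ℙ {ω | t < G ω / H ω} * ENNReal.ofReal (1 + t)⁻¹
      = ENNReal.ofReal (mg * ((mg + mh * t) * (1 + t))⁻¹) := by
    intro t (ht : 0 < t)
    rw [measure_lt_div_of_indepFun_expMeasure hG hH ha hb hGd hHd hind ht.le,
      ← ENNReal.ofReal_mul (by positivity)]
    congr 1
    field_simp
  calc ∫ ω, log (1 + G ω / H ω) ∂ℙ
      = (∫⁻ ω, ENNReal.ofReal (log (1 + G ω / H ω)) ∂ℙ).toReal :=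
        integral_eq_lintegral_of_nonneg_ae
          (hZ.mono fun ω hω ↦ log_nonneg (le_add_of_nonneg_right hω))
          (measurable_const.add (hG.div hH)).log.aestronglyMeasurable
    _ = (∫⁻ t in Ioi 0, ENNReal.ofReal (mg * ((mg + mh * t) * (1 + t))⁻¹)).toReal := by
        rw [lintegral_log_one_add_eq_lintegral_meas_lt _ hZ (hG.div hH).aemeasurable,
          setLIntegral_congr_fun measurableSet_Ioi htail]
    _ = ∫ t in Ioi 0, mg * ((mg + mh * t) * (1 + t))⁻¹ :=
        (integral_eq_lintegral_of_nonneg_ae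
          ((ae_restrict_mem measurableSet_Ioi).mono fun t (ht : 0 < t) ↦ by positivity)
          (by fun_prop)).symm
    _ = mg * log (mg / mh) / (mg - mh) := by
        rw [integral_const_mul, integral_Ioi_inv_mul_one_add hmg hmh hne, mul_div_assoc]

theorem exp_log_one_add_ratio_mean {Ω : Type*} [MeasureSpace Ω]
    [IsProbabilityMeasure (ℙ : Measure Ω)]
    (G H : Ω → ℝ) (mg mh : ℝ) (hmg : 0 < mg) (hmh : 0 < mh) (hne : mg ≠ mh)
    (hG : Measurable G) (hH : Measurable H)
    (hGd : Measure.map G ℙ = expMeasure (1 / mg))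
    (hHd : Measure.map H ℙ = expMeasure (1 / mh))
    (hind : IndepFun G H ℙ) :
    ∫ ω, Real.log (1 + G ω / H ω) ∂ℙ = mg * Real.log (mg / mh) / (mg - mh) :=
  exp_log_one_add_ratio_mean_general G H mg mh hmg hmh hne hG hH hGd hHd hind
end

section
/- Let γ_g = ρ G, γ_h = ρ H, γ_f = ρ F with G, H, F > 0 fixed, and define the instantaneous secrecy rate R_s(ρ) = max(0, (1/3)[log₂(1+γ_D) - log₂(1 + max(γ_R1^(1), γ_R2, γ_R1^(3)))]) using the exact SINR expressions of the three-hop scheme. Then the high-SNR slope lim_{ρ→∞} R_s(ρ)/log₂(ρ) equals 1/3. -/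
open Filter Real

/-- Instantaneous secrecy rate of the three-hop untrusted relaying scheme with
channel gains `G, H, F` and transmit SNR `ρ`, using the exact SINR expressions. -/
noncomputable def secrecyRate (G H F ρ : ℝ) : ℝ :=
  let γg := ρ * G
  let γh := ρ * H
  let γf := ρ * F
  let γR1₁ := γg / (γh + 1)
  let γR2 := γg * γh / (γg * γf + γh * γf + 2 * γh + γg + γf + 1)
  let γR1₃ := γg * γh ^ 2 /
    (γh ^ 2 + γh * (γg + 1) ^ 2 + (γg + γh + 1) ^ 2 * (γf + 1))
  let γD := γg * γh * γf /
    (3 * γh * γf + 2 * γf * γg + γg * γh + 2 * γf + 2 * γh + γg + 1)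
  max 0 ((1 / 3) * (Real.logb 2 (1 + γD) - Real.logb 2 (1 + max γR1₁ (max γR2 γR1₃))))

open Topology

/-!
Each SINR is a ratio of polynomials in `ρ`. For the three relay SINRs the numerator and the
denominator have the same degree, so they converge to finite limits; the destination SINR has
a numerator of one degree more, so `γ_D ~ c ρ` with `c > 0`. Hence
`log₂ (1 + γ_D) = log₂ ρ + O(1)` while the leakage term is `O(1)`, and dividing by `log₂ ρ`
leaves the prefactor `1/3`. The limits of the rational functions are computed as values at
`t = 0` after substituting `t = ρ⁻¹`.
-/

theorem tendsto_atTop_of_eq_comp_inv {f g : ℝ → ℝ} (hg : ContinuousAt g 0)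
    (hfg : ∀ ρ > 0, f ρ = g ρ⁻¹) : Tendsto f atTop (𝓝 (g 0)) :=
  (hg.tendsto.comp tendsto_inv_atTop_zero).congr'
    (by filter_upwards [eventually_gt_atTop 0] with ρ hρ using (hfg ρ hρ).symm)

section Slope

variable {b c k : ℝ} {u v : ℝ → ℝ}

theorem Filter.Tendsto.logb_div_logb_atTop (hb : 1 < b) (hu : Tendsto u atTop (𝓝 c))
    (hc : c ≠ 0) :
    Tendsto (fun ρ => Real.logb b (u ρ) / Real.logb b ρ) atTop (𝓝 0) :=
  ((continuousAt_logb hc).tendsto.comp hu).div_atTop (tendsto_logb_atTop hb)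

theorem tendsto_logb_div_logb_of_tendsto_div_self (hb : 1 < b)
    (hu : Tendsto (fun ρ => u ρ / ρ) atTop (𝓝 c)) (hc : c ≠ 0) :
    Tendsto (fun ρ => logb b (u ρ) / logb b ρ) atTop (𝓝 1) := by
  rw [← zero_add 1]
  refine ((hu.logb_div_logb_atTop hb hc).add_const 1).congr' ?_
  filter_upwards [eventually_gt_atTop 1, hu.eventually_ne hc] with ρ hρ hne
  rw [div_add_one (logb_pos hb hρ).ne', ← logb_mul hne (by positivity),
    div_mul_cancel₀ _ (by positivity)]

theorem tendsto_max_zero_mul_logb_sub_logb_div_logb {c' : ℝ} (hb : 1 < b)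
    (hu : Tendsto (fun ρ => u ρ / ρ) atTop (𝓝 c)) (hc : c ≠ 0)
    (hv : Tendsto v atTop (𝓝 c')) (hc' : c' ≠ 0) :
    Tendsto (fun ρ => max 0 (k * (logb b (u ρ) - logb b (v ρ))) / logb b ρ) atTop
      (𝓝 (max 0 k)) := by
  have hslope := (tendsto_logb_div_logb_of_tendsto_div_self hb hu hc).sub
    (hv.logb_div_logb_atTop hb hc')
  rw [sub_zero] at hslope
  have hmax := tendsto_const_nhds (x := (0 : ℝ)) |>.max (hslope.const_mul k)
  rw [mul_one] at hmax
  refine hmax.congr' ?_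
  filter_upwards [eventually_gt_atTop 1] with ρ hρ
  rw [← max_div_div_right (logb_pos hb hρ).le, zero_div, mul_div_assoc, sub_div]

end Slope

section SINR

variable {G H F : ℝ}

theorem tendsto_sinr_relay1_hop1 (hH : 0 < H) :
    Tendsto (fun ρ => ρ * G / (ρ * H + 1)) atTop (𝓝 (G / H)) := by
  convert tendsto_atTop_of_eq_comp_inv (g := fun t => G / (H + t))
    (by fun_prop (disch := positivity)) fun ρ hρ => ?_ using 2
  · simp
  · field_simp

theorem tendsto_sinr_relay2 (hG : 0 < G) (hH : 0 < H) (hF : 0 < F) :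
    Tendsto (fun ρ => ρ * G * (ρ * H) /
        (ρ * G * (ρ * F) + ρ * H * (ρ * F) + 2 * (ρ * H) + ρ * G + ρ * F + 1))
      atTop (𝓝 (G * H / ((G + H) * F))) := by
  convert tendsto_atTop_of_eq_comp_inv
    (g := fun t => G * H / ((G + H) * F + (2 * H + G + F) * t + t ^ 2))
    (by fun_prop (disch := positivity)) fun ρ hρ => ?_ using 2
  · simp
  · field_simp
    ring

theorem tendsto_sinr_relay1_hop3 (hG : 0 < G) (hH : 0 < H) (hF : 0 < F) :
    Tendsto (fun ρ => ρ * G * (ρ * H) ^ 2 /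
        ((ρ * H) ^ 2 + ρ * H * (ρ * G + 1) ^ 2 + (ρ * G + ρ * H + 1) ^ 2 * (ρ * F + 1)))
      atTop (𝓝 (G * H ^ 2 / (H * G ^ 2 + (G + H) ^ 2 * F))) := by
  convert tendsto_atTop_of_eq_comp_inv
    (g := fun t => G * H ^ 2 / (H ^ 2 * t + H * (G + t) ^ 2 + (G + H + t) ^ 2 * (F + t)))
    (by fun_prop (disch := positivity)) fun ρ hρ => ?_ using 2
  · simp
  · field_simp

theorem tendsto_one_add_sinr_destination_div_self (hG : 0 < G) (hH : 0 < H) (hF : 0 < F) :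
    Tendsto (fun ρ => (1 + ρ * G * (ρ * H) * (ρ * F) /
        (3 * (ρ * H) * (ρ * F) + 2 * (ρ * F) * (ρ * G) + ρ * G * (ρ * H) + 2 * (ρ * F) +
          2 * (ρ * H) + ρ * G + 1)) / ρ)
      atTop (𝓝 (G * H * F / (3 * H * F + 2 * F * G + G * H))) := by
  convert tendsto_atTop_of_eq_comp_inv
    (g := fun t => t + G * H * F /
      (3 * H * F + 2 * F * G + G * H + (2 * F + 2 * H + G) * t + t ^ 2))
    (by fun_prop (disch := positivity)) fun ρ hρ => ?_ using 2
  · simp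
  · field_simp
    ring

end SINR

theorem high_snr_slope (G H F : ℝ) (hG : 0 < G) (hH : 0 < H) (hF : 0 < F) :
    Tendsto (fun ρ : ℝ => secrecyRate G H F ρ / Real.logb 2 ρ) atTop
      (nhds (1 / 3)) := by
  have hleak := ((tendsto_sinr_relay1_hop1 (G := G) hH).max
    ((tendsto_sinr_relay2 hG hH hF).max (tendsto_sinr_relay1_hop3 hG hH hF))).const_add 1
  have hslope := tendsto_max_zero_mul_logb_sub_logb_div_logb (k := 1 / 3) one_lt_two
    (tendsto_one_add_sinr_destination_div_self hG hH hF) (by positivity) hleak (by positivity)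
  rwa [max_eq_right (by norm_num)] at hslope
end

section
/- Let γ_D = γ_g γ_h γ_f/(3γ_h γ_f + 2γ_f γ_g + γ_g γ_h) where γ_g, γ_h, γ_f are independent exponential random variables with means m_g, m_h, m_f. Then E[ln(1+γ_D)] ≥ ln(1 + exp(-3Φ + ln(m_g m_h m_f) - ln(3 m_h m_f + 2 m_f m_g + m_g m_h))), where Φ is the Euler–Mascheroni constant. -/
/-!
With `D = 3 γ_h γ_f + 2 γ_f γ_g + γ_g γ_h` and `X = log γ_g + log γ_h + log γ_f - log D` we have
`log (1 + γ_D) = log (1 + exp X)`. The function `x ↦ log (1 + exp x)` is convex and increasing, so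
Jensen gives `E log (1 + γ_D) ≥ log (1 + exp (E X))`, and it remains to bound `E X` from below:
`E log γ_k = log m_k - Φ` because `∫₀^∞ log t e^{-t} dt = Γ'(1) = -Φ`, while concavity of `log`
and pairwise independence give `E log D ≤ log E D = log (3 m_h m_f + 2 m_f m_g + m_g m_h)`.
-/

open MeasureTheory ProbabilityTheory Real Set Filter Topology Asymptotics
open scoped ENNReal

theorem integrableOn_log_mul_exp_neg :
    IntegrableOn (fun t : ℝ => log t * exp (-t)) (Ioi 0) := by
  have hcont : Continuous fun t : ℝ => ((exp (-t) : ℝ) : ℂ) := by fun_prop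
  have h : MellinConvergent (fun t : ℝ => log t • ((exp (-t) : ℝ) : ℂ)) 1 := by
    refine (mellin_hasDerivAt_of_isBigO_rpow (a := 2) (b := 0)
      (hcont.continuousOn.locallyIntegrableOn measurableSet_Ioi) ?_ (by norm_num) ?_
      (by norm_num)).1
    · rw [← isBigO_norm_left]
      simp_rw [Complex.norm_real, isBigO_norm_left]
      simpa only [neg_one_mul] using (isLittleO_exp_neg_mul_rpow_atTop zero_lt_one _).isBigO
    · simp_rw [neg_zero, rpow_zero]
      exact isBigO_const_of_tendsto ((hcont.tendsto 0).mono_left nhdsWithin_le_nhds) (by simp)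
  refine IntegrableOn.congr_fun (Integrable.re h) (fun t _ => ?_) measurableSet_Ioi
  simp only [sub_self, Complex.cpow_zero, one_smul, Complex.real_smul, ← Complex.ofReal_mul]
  exact Complex.ofReal_re _

/-- The integral is `Γ'(1)`. -/
theorem integral_log_mul_exp_neg :
    ∫ t in Ioi 0, log t * exp (-t) = -eulerMascheroniConstant := by
  have hGamma : Complex.Gamma =ᶠ[𝓝 1] Complex.GammaIntegral := by
    filter_upwards [(Complex.continuous_re.isOpen_preimage _ isOpen_Ioi).mem_nhds
      (by norm_num : (1 : ℂ) ∈ Complex.re ⁻¹' Ioi 0)] with s hs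
    using Complex.Gamma_eq_integral hs
  have h := (Complex.hasDerivAt_GammaIntegral (s := 1) (by norm_num)).unique
    (Complex.hasDerivAt_Gamma_one.congr_of_eventuallyEq hGamma.symm)
  simp only [sub_self, Complex.cpow_zero, one_mul, ← Complex.ofReal_mul] at h
  exact_mod_cast h

section ExponentialDistribution

variable {r : ℝ}

theorem toNNReal_exponentialPDFReal_smul (hr : 0 ≤ r) (φ : ℝ → ℝ) (x : ℝ) :
    (exponentialPDFReal r x).toNNReal • φ x
      = (Ici 0).indicator (fun x => r * exp (-(r * x)) * φ x) x := by
  by_cases hx : 0 ≤ x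
  · simp [exponentialPDFReal, gammaPDFReal, hx, NNReal.smul_def, hr, mul_nonneg, exp_nonneg]
  · simp [exponentialPDFReal, gammaPDFReal, hx]

theorem expMeasure_eq_withDensity_toNNReal (r : ℝ) :
    expMeasure r = volume.withDensity fun x => ((exponentialPDFReal r x).toNNReal : ℝ≥0∞) :=
  rfl

theorem integral_expMeasure (hr : 0 ≤ r) (φ : ℝ → ℝ) :
    ∫ x, φ x ∂expMeasure r = ∫ x in Ioi 0, r * exp (-(r * x)) * φ x := by
  rw [expMeasure_eq_withDensity_toNNReal, integral_withDensity_eq_integral_smul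
    (measurable_exponentialPDFReal r).real_toNNReal]
  simp only [toNNReal_exponentialPDFReal_smul hr, integral_indicator measurableSet_Ici,
    integral_Ici_eq_integral_Ioi]

theorem integrable_expMeasure_iff (hr : 0 ≤ r) (φ : ℝ → ℝ) :
    Integrable φ (expMeasure r) ↔ IntegrableOn (fun x => r * exp (-(r * x)) * φ x) (Ioi 0) := by
  rw [expMeasure_eq_withDensity_toNNReal, integrable_withDensity_iff_integrable_smul
    (measurable_exponentialPDFReal r).real_toNNReal]
  simp only [toNNReal_exponentialPDFReal_smul hr, integrable_indicator_iff measurableSet_Ici]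
  exact integrableOn_Ici_iff_integrableOn_Ioi

theorem integral_expMeasure_eq_integral_exp_neg (hr : 0 < r) (φ : ℝ → ℝ) :
    ∫ x, φ x ∂expMeasure r = ∫ t in Ioi 0, exp (-t) * φ (t / r) := by
  have h := integral_comp_mul_left_Ioi (fun t => exp (-t) * φ (t / r)) 0 hr
  rw [mul_zero, smul_eq_mul, eq_inv_mul_iff_mul_eq₀ hr.ne', ← integral_const_mul] at h
  rw [integral_expMeasure hr.le, ← h]
  refine setIntegral_congr_fun measurableSet_Ioi fun x _ => ?_
  field_simp

theorem integrable_expMeasure_iff_integrableOn_exp_neg (hr : 0 < r) (φ : ℝ → ℝ) :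
    Integrable φ (expMeasure r) ↔ IntegrableOn (fun t => exp (-t) * φ (t / r)) (Ioi 0) := by
  have h := integrableOn_Ioi_comp_mul_left_iff (fun t => r * (exp (-t) * φ (t / r))) 0 hr
  rw [mul_zero] at h
  rw [integrable_expMeasure_iff hr.le]
  refine Iff.trans ?_ (h.trans (integrable_const_mul_iff (isUnit_iff_ne_zero.2 hr.ne') _))
  refine integrableOn_congr_fun (fun x _ => ?_) measurableSet_Ioi
  field_simp

theorem ae_pos_expMeasure : ∀ᵐ x ∂expMeasure r, 0 < x := by
  refine (ae_withDensity_iff (f := gammaPDF 1 r)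
    (measurable_gammaPDFReal 1 r).ennreal_ofReal).2 ?_
  filter_upwards [Measure.ae_ne volume 0] with x hx hpdf
  exact lt_of_le_of_ne (not_lt.1 fun hneg => hpdf (gammaPDF_of_neg hneg)) hx.symm

theorem integrable_id_expMeasure (hr : 0 < r) : Integrable (fun x => x) (expMeasure r) := by
  rw [integrable_expMeasure_iff_integrableOn_exp_neg hr]
  refine IntegrableOn.congr_fun ((GammaIntegral_convergent two_pos).div_const r)
    (fun t _ => ?_) measurableSet_Ioi
  norm_num [mul_div_assoc]

theorem integral_id_expMeasure (hr : 0 < r) : ∫ x, x ∂expMeasure r = r⁻¹ := by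
  rw [integral_expMeasure_eq_integral_exp_neg hr]
  calc ∫ t in Ioi 0, exp (-t) * (t / r)
      = (∫ t in Ioi 0, exp (-t) * t ^ ((2 : ℝ) - 1)) / r := by
        rw [← integral_div]
        refine setIntegral_congr_fun measurableSet_Ioi fun t _ => ?_
        norm_num [mul_div_assoc]
    _ = r⁻¹ := by rw [← Gamma_eq_integral two_pos, Gamma_two, one_div]

theorem integrable_log_expMeasure (hr : 0 < r) : Integrable log (expMeasure r) := by
  rw [integrable_expMeasure_iff_integrableOn_exp_neg hr]
  refine IntegrableOn.congr_fun
    (integrableOn_log_mul_exp_neg.sub ((integrableOn_exp_neg_Ioi 0).const_mul (log r)))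
    (fun t (ht : 0 < t) => ?_) measurableSet_Ioi
  simp only [Pi.sub_apply, log_div ht.ne' hr.ne']
  ring

theorem integral_log_expMeasure (hr : 0 < r) :
    ∫ x, log x ∂expMeasure r = -eulerMascheroniConstant - log r := by
  rw [integral_expMeasure_eq_integral_exp_neg hr]
  calc ∫ t in Ioi 0, exp (-t) * log (t / r)
      = ∫ t in Ioi 0, (log t * exp (-t) - log r * exp (-t)) := by
        refine setIntegral_congr_fun measurableSet_Ioi fun t (ht : 0 < t) => ?_
        simp only [log_div ht.ne' hr.ne']
        ring
    _ = -eulerMascheroniConstant - log r := by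
        rw [integral_sub integrableOn_log_mul_exp_neg ((integrableOn_exp_neg_Ioi 0).const_mul _),
          integral_const_mul, integral_log_mul_exp_neg, integral_exp_neg_Ioi_zero, mul_one]

end ExponentialDistribution

namespace ProbabilityTheory.HasLaw

variable {Ω 𝓧 : Type*} [MeasurableSpace Ω] [MeasurableSpace 𝓧] {P : Measure Ω}

theorem integrable_comp {X : Ω → 𝓧} {μ : Measure 𝓧} (hX : HasLaw X μ P) {f : 𝓧 → ℝ}
    (hf : Integrable f μ) : Integrable (f ∘ X) P := by
  rw [← hX.map_eq] at hf
  exact hf.comp_aemeasurable hX.aemeasurable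

variable {X : Ω → ℝ} {r : ℝ}

theorem ae_pos_of_expMeasure (hX : HasLaw X (expMeasure r) P) : ∀ᵐ ω ∂P, 0 < X ω :=
  (hX.ae_iff (p := fun x => 0 < x) (measurableSet_setOfPred.1 measurableSet_Ioi)).2
    ae_pos_expMeasure

theorem integrable_of_expMeasure (hX : HasLaw X (expMeasure r) P) (hr : 0 < r) :
    Integrable X P :=
  hX.integrable_comp (integrable_id_expMeasure hr)

theorem integral_of_expMeasure (hX : HasLaw X (expMeasure r) P) (hr : 0 < r) :
    ∫ ω, X ω ∂P = r⁻¹ := by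
  rw [← integral_id_expMeasure hr]
  exact hX.integral_eq

theorem integrable_log_of_expMeasure (hX : HasLaw X (expMeasure r) P) (hr : 0 < r) :
    Integrable (fun ω => log (X ω)) P :=
  hX.integrable_comp (integrable_log_expMeasure hr)

theorem integral_log_of_expMeasure (hX : HasLaw X (expMeasure r) P) (hr : 0 < r) :
    ∫ ω, log (X ω) ∂P = -eulerMascheroniConstant - log r := by
  rw [← integral_log_expMeasure hr, ← hX.integral_comp measurable_log.aestronglyMeasurable]
  rfl

end ProbabilityTheory.HasLaw

section Jensen

variable {Ω : Type*} [MeasurableSpace Ω] {P : Measure Ω} [IsProbabilityMeasure P]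

theorem map_integral_le_integral_of_tangent {g : ℝ → ℝ} {X : Ω → ℝ} {k : ℝ}
    (hX : Integrable X P) (hgX : Integrable (fun ω => g (X ω)) P)
    (htan : ∀ᵐ ω ∂P, g (∫ ω, X ω ∂P) + k * (X ω - ∫ ω, X ω ∂P) ≤ g (X ω)) :
    g (∫ ω, X ω ∂P) ≤ ∫ ω, g (X ω) ∂P := by
  set m := ∫ ω, X ω ∂P with hm
  have hline : Integrable (fun ω => k * (X ω - m)) P := (hX.sub (integrable_const m)).const_mul k
  calc g m = ∫ ω, (g m + k * (X ω - m)) ∂P := by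
        rw [integral_add (integrable_const _) hline, integral_const_mul,
          integral_sub hX (integrable_const m), ← hm]
        simp
    _ ≤ ∫ ω, g (X ω) ∂P := integral_mono_ae ((integrable_const _).add hline) hgX htan

theorem add_mul_sub_le_log_one_add_exp (t x : ℝ) :
    log (1 + exp t) + exp t / (1 + exp t) * (x - t) ≤ log (1 + exp x) := by
  set s := exp t / (1 + exp t) with hs_def
  have hs : 1 - s = 1 / (1 + exp t) := by rw [hs_def]; field_simp; ring
  have hconv := convexOn_exp.2 (mem_univ 0) (mem_univ (x - t))
    (hs ▸ by positivity : 0 ≤ 1 - s) (by positivity : 0 ≤ s) (by ring)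
  have hrhs : (1 - s) • exp 0 + s • exp (x - t) = (1 + exp x) / (1 + exp t) := by
    rw [smul_eq_mul, smul_eq_mul, exp_zero, exp_sub, hs, hs_def]
    field_simp
  rw [smul_zero, zero_add, smul_eq_mul, hrhs, ← le_log_iff_exp_le (by positivity),
    log_div (by positivity) (by positivity)] at hconv
  linarith

theorem log_one_add_exp_le_abs_add_log_two (x : ℝ) : log (1 + exp x) ≤ |x| + log 2 := by
  have h : 1 + exp x ≤ 2 * exp |x| := by
    have := one_le_exp (abs_nonneg x)
    have := exp_le_exp.2 (le_abs_self x)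
    linarith
  calc log (1 + exp x) ≤ log (2 * exp |x|) := log_le_log (by positivity) h
    _ = |x| + log 2 := by rw [log_mul two_ne_zero (exp_pos _).ne', log_exp, add_comm]

theorem log_one_add_exp_integral_le {X : Ω → ℝ} (hX : Integrable X P) :
    log (1 + exp (∫ ω, X ω ∂P)) ≤ ∫ ω, log (1 + exp (X ω)) ∂P := by
  have hmeas : Measurable fun x : ℝ => log (1 + exp x) := by fun_prop
  have hint : Integrable (fun ω => log (1 + exp (X ω))) P := by
    refine integrable_of_le_of_le (g₁ := 0) (g₂ := fun ω => |X ω| + log 2)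
      (hmeas.comp_aemeasurable hX.aemeasurable).aestronglyMeasurable
      (ae_of_all _ fun ω => ?_) (ae_of_all _ fun ω => ?_)
      (integrable_zero _ _ _) (hX.abs.add (integrable_const _))
    · exact log_nonneg (by linarith [exp_pos (X ω)])
    · exact log_one_add_exp_le_abs_add_log_two (X ω)
  exact map_integral_le_integral_of_tangent (g := fun x => log (1 + exp x)) hX hint
    (ae_of_all _ fun ω => add_mul_sub_le_log_one_add_exp _ _)

theorem integral_log_le_log_integral {D : Ω → ℝ} (hD : ∀ᵐ ω ∂P, 0 < D ω)
    (hDi : Integrable D P) (hlogD : Integrable (fun ω => log (D ω)) P) :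
    ∫ ω, log (D ω) ∂P ≤ log (∫ ω, D ω ∂P) := by
  set c := ∫ ω, D ω ∂P with hc_def
  have hc : 0 < c := by
    refine (integral_pos_iff_support_of_nonneg_ae (hD.mono fun _ h => h.le) hDi).2 ?_
    refine pos_iff_ne_zero.2 fun h0 => ?_
    obtain ⟨ω, hpos, hzero⟩ := (hD.and (measure_eq_zero_iff_ae_notMem.1 h0)).exists
    exact hzero hpos.ne'
  have h := map_integral_le_integral_of_tangent (g := fun x => -log x) (k := -c⁻¹)
    hDi hlogD.neg ?_
  · rw [integral_neg] at h
    linarith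
  filter_upwards [hD] with ω hω
  have htan := log_le_sub_one_of_pos (div_pos hω hc)
  rw [log_div hω.ne' hc.ne'] at htan
  have : c⁻¹ * (D ω - c) = D ω / c - 1 := by field_simp
  linarith

theorem log_one_add_exp_le_integral_log_one_add_div {U D : Ω → ℝ} (hU : ∀ᵐ ω ∂P, 0 < U ω)
    (hD : ∀ᵐ ω ∂P, 0 < D ω) (hlogU : Integrable (fun ω => log (U ω)) P) (hDi : Integrable D P)
    (hlogD : Integrable (fun ω => log (D ω)) P) :
    log (1 + exp ((∫ ω, log (U ω) ∂P) - log (∫ ω, D ω ∂P))) ≤ ∫ ω, log (1 + U ω / D ω) ∂P := by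
  calc log (1 + exp ((∫ ω, log (U ω) ∂P) - log (∫ ω, D ω ∂P)))
      ≤ log (1 + exp (∫ ω, (log (U ω) - log (D ω)) ∂P)) := by
        rw [integral_sub hlogU hlogD]
        gcongr
        exact integral_log_le_log_integral hD hDi hlogD
    _ ≤ ∫ ω, log (1 + exp (log (U ω) - log (D ω))) ∂P :=
        log_one_add_exp_integral_le (hlogU.sub hlogD)
    _ = ∫ ω, log (1 + U ω / D ω) ∂P := by
        refine integral_congr_ae ?_
        filter_upwards [hU, hD] with ω hUω hDω
        rw [exp_sub, exp_log hUω, exp_log hDω]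

end Jensen

section ThreeExponentials

variable {Ω : Type*} [MeasurableSpace Ω] {P : Measure Ω} {G H F : Ω → ℝ} {a b c : ℝ}

theorem log_mul_mul_ae_eq (hG : ∀ᵐ ω ∂P, 0 < G ω) (hH : ∀ᵐ ω ∂P, 0 < H ω)
    (hF : ∀ᵐ ω ∂P, 0 < F ω) :
    (fun ω => log (G ω * H ω * F ω)) =ᵐ[P] fun ω => log (G ω) + log (H ω) + log (F ω) := by
  filter_upwards [hG, hH, hF] with ω hGω hHω hFω
  rw [log_mul (by positivity) hFω.ne', log_mul hGω.ne' hHω.ne']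

theorem ae_pos_denominator (ha : 0 ≤ a) (hb : 0 ≤ b) (hc : 0 < c) (hG : ∀ᵐ ω ∂P, 0 < G ω)
    (hH : ∀ᵐ ω ∂P, 0 < H ω) (hF : ∀ᵐ ω ∂P, 0 < F ω) :
    ∀ᵐ ω ∂P, 0 < a * H ω * F ω + b * F ω * G ω + c * G ω * H ω := by
  filter_upwards [hG, hH, hF] with ω hGω hHω hFω
  positivity

theorem integrable_denominator (hG : Integrable G P) (hH : Integrable H P) (hF : Integrable F P)
    (hHF : IndepFun H F P) (hFG : IndepFun F G P) (hGH : IndepFun G H P) :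
    Integrable (fun ω => a * H ω * F ω + b * F ω * G ω + c * G ω * H ω) P := by
  simp only [mul_assoc]
  exact (((hHF.integrable_mul hH hF).const_mul a).add
    ((hFG.integrable_mul hF hG).const_mul b)).add ((hGH.integrable_mul hG hH).const_mul c)

theorem integral_denominator (hG : Integrable G P) (hH : Integrable H P) (hF : Integrable F P)
    (hHF : IndepFun H F P) (hFG : IndepFun F G P) (hGH : IndepFun G H P) :
    ∫ ω, (a * H ω * F ω + b * F ω * G ω + c * G ω * H ω) ∂P
      = a * (∫ ω, H ω ∂P) * (∫ ω, F ω ∂P) + b * (∫ ω, F ω ∂P) * (∫ ω, G ω ∂P)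
        + c * (∫ ω, G ω ∂P) * (∫ ω, H ω ∂P) := by
  have hiHF : Integrable (fun ω => a * (H ω * F ω)) P := (hHF.integrable_mul hH hF).const_mul a
  have hiFG : Integrable (fun ω => b * (F ω * G ω)) P := (hFG.integrable_mul hF hG).const_mul b
  have hiGH : Integrable (fun ω => c * (G ω * H ω)) P := (hGH.integrable_mul hG hH).const_mul c
  simp only [mul_assoc]
  rw [integral_add (f := fun ω => a * (H ω * F ω) + b * (F ω * G ω)) (hiHF.add hiFG) hiGH,
    integral_add hiHF hiFG,
    integral_const_mul, integral_const_mul, integral_const_mul,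
    hHF.integral_fun_mul_eq_mul_integral hH.1 hF.1,
    hFG.integral_fun_mul_eq_mul_integral hF.1 hG.1,
    hGH.integral_fun_mul_eq_mul_integral hG.1 hH.1]

/-- `log (c G H) ≤ log D ≤ D - 1` -/
theorem integrable_log_denominator [IsFiniteMeasure P] (ha : 0 ≤ a) (hb : 0 ≤ b) (hc : 0 < c)
    (hG : ∀ᵐ ω ∂P, 0 < G ω) (hH : ∀ᵐ ω ∂P, 0 < H ω) (hF : ∀ᵐ ω ∂P, 0 < F ω)
    (hlogG : Integrable (fun ω => log (G ω)) P) (hlogH : Integrable (fun ω => log (H ω)) P)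
    (hD : Integrable (fun ω => a * H ω * F ω + b * F ω * G ω + c * G ω * H ω) P) :
    Integrable (fun ω => log (a * H ω * F ω + b * F ω * G ω + c * G ω * H ω)) P := by
  refine integrable_of_le_of_le (g₁ := fun ω => log c + log (G ω) + log (H ω))
    (g₂ := fun ω => a * H ω * F ω + b * F ω * G ω + c * G ω * H ω - 1)
    (measurable_log.comp_aemeasurable hD.aemeasurable).aestronglyMeasurable ?_ ?_
    (((integrable_const _).add hlogG).add hlogH) (hD.sub (integrable_const 1))
  · filter_upwards [hG, hH, hF] with ω hGω hHω hFω
    rw [← log_mul hc.ne' hGω.ne', ← log_mul (by positivity) hHω.ne']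
    exact log_le_log (by positivity) (by nlinarith [mul_pos hHω hFω, mul_pos hFω hGω])
  · filter_upwards [ae_pos_denominator ha hb hc hG hH hF] with ω hω
    exact log_le_sub_one_of_pos hω

end ThreeExponentials

theorem log_one_add_exp_le_integral_log_one_add_ratio {Ω : Type*} [MeasurableSpace Ω]
    {P : Measure Ω} [IsProbabilityMeasure P] {G H F : Ω → ℝ} {a b c mg mh mf : ℝ}
    (ha : 0 ≤ a) (hb : 0 ≤ b) (hc : 0 < c) (hmg : 0 < mg) (hmh : 0 < mh) (hmf : 0 < mf)
    (hG : HasLaw G (expMeasure mg⁻¹) P) (hH : HasLaw H (expMeasure mh⁻¹) P)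
    (hF : HasLaw F (expMeasure mf⁻¹) P)
    (hHF : IndepFun H F P) (hFG : IndepFun F G P) (hGH : IndepFun G H P) :
    log (1 + exp (-3 * eulerMascheroniConstant + log (mg * mh * mf)
        - log (a * mh * mf + b * mf * mg + c * mg * mh)))
      ≤ ∫ ω, log (1 + G ω * H ω * F ω / (a * H ω * F ω + b * F ω * G ω + c * G ω * H ω)) ∂P := by
  have hGpos := hG.ae_pos_of_expMeasure
  have hHpos := hH.ae_pos_of_expMeasure
  have hFpos := hF.ae_pos_of_expMeasure
  have hlog := log_mul_mul_ae_eq hGpos hHpos hFpos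
  have hlogG := hG.integrable_log_of_expMeasure (inv_pos.2 hmg)
  have hlogH := hH.integrable_log_of_expMeasure (inv_pos.2 hmh)
  have hlogF := hF.integrable_log_of_expMeasure (inv_pos.2 hmf)
  have hGi := hG.integrable_of_expMeasure (inv_pos.2 hmg)
  have hHi := hH.integrable_of_expMeasure (inv_pos.2 hmh)
  have hFi := hF.integrable_of_expMeasure (inv_pos.2 hmf)
  have hD := integrable_denominator (a := a) (b := b) (c := c) hGi hHi hFi hHF hFG hGH
  have key := log_one_add_exp_le_integral_log_one_add_div
    (hGpos.and (hHpos.and hFpos) |>.mono fun ω ⟨hGω, hHω, hFω⟩ => by positivity)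
    (ae_pos_denominator ha hb hc hGpos hHpos hFpos)
    (((hlogG.add hlogH).add hlogF).congr hlog.symm) hD
    (integrable_log_denominator ha hb hc hGpos hHpos hFpos hlogG hlogH hD)
  rw [integral_denominator hGi hHi hFi hHF hFG hGH, integral_congr_ae hlog,
    integral_add (f := fun ω => log (G ω) + log (H ω)) (hlogG.add hlogH) hlogF,
    integral_add hlogG hlogH,
    hG.integral_of_expMeasure (inv_pos.2 hmg), hH.integral_of_expMeasure (inv_pos.2 hmh),
    hF.integral_of_expMeasure (inv_pos.2 hmf), hG.integral_log_of_expMeasure (inv_pos.2 hmg),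
    hH.integral_log_of_expMeasure (inv_pos.2 hmh), hF.integral_log_of_expMeasure (inv_pos.2 hmf)]
    at key
  simp only [log_inv, inv_inv] at key
  convert key using 4
  rw [log_mul (by positivity) hmf.ne', log_mul hmg.ne' hmh.ne']
  ring

theorem ergodic_rate_lower_bound {Ω : Type*} [MeasureSpace Ω]
    [IsProbabilityMeasure (ℙ : Measure Ω)]
    (G H F : Ω → ℝ) (mg mh mf : ℝ) (hmg : 0 < mg) (hmh : 0 < mh) (hmf : 0 < mf)
    (hG : Measurable G) (hH : Measurable H) (hF : Measurable F)
    (hGd : Measure.map G ℙ = expMeasure (1 / mg))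
    (hHd : Measure.map H ℙ = expMeasure (1 / mh))
    (hFd : Measure.map F ℙ = expMeasure (1 / mf))
    (hind : iIndepFun
      ![G, H, F] ℙ) :
    ∫ ω, Real.log (1 + G ω * H ω * F ω /
        (3 * H ω * F ω + 2 * F ω * G ω + G ω * H ω)) ∂ℙ ≥
      Real.log (1 + Real.exp (-3 * Real.eulerMascheroniConstant +
        Real.log (mg * mh * mf) - Real.log (3 * mh * mf + 2 * mf * mg + mg * mh))) := by
  rw [one_div] at hGd hHd hFd
  have h := log_one_add_exp_le_integral_log_one_add_ratio (a := 3) (b := 2) (c := 1)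
    (by norm_num) (by norm_num) one_pos hmg hmh hmf ⟨hG.aemeasurable, hGd⟩
    ⟨hH.aemeasurable, hHd⟩ ⟨hF.aemeasurable, hFd⟩ (hind.indepFun (by decide : (1 : Fin 3) ≠ 2))
    (hind.indepFun (by decide : (2 : Fin 3) ≠ 0)) (hind.indepFun (by decide : (0 : Fin 3) ≠ 1))
  simpa only [one_mul] using h
end
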